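/- arXiv:2603.18458 — 7 statements merged into one kernel-verified Lean document; each statement's English description precedes it below -/
import Mathlib

section
/- Let P₁ and P₂ be polytopes in ℝ² (each the convex hull of a nonempty finite set), with a point of P_i written as (x_i,t_i). Then conv{(x₁,x₂,t₁,t₂,μ) ∈ ℝ⁵ : μ = t₁t₂ and (x_i,t_i) ∈ P_i for i = 1,2} = conv{(x₁,x₂,t₁,t₂,μ) ∈ ℝ⁵ : μ = t₁t₂ and (x_i,t_i) is an extreme point of P_i for i = 1,2}. -/
/-!
Write `Φ(a, b) = (a.1, b.1, a.2, b.2, a.2 * b.2)`, so that both sides are convex hulls of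
`Φ '' (P₁ × P₂)` and `Φ '' (ext P₁ × ext P₂)`. The map `Φ` is affine in each argument
separately, so the image of a product of convex hulls lies in the convex hull of the image of
the product: move the first argument inside its hull with the second fixed, then the second.
A polytope is the convex hull of its extreme points (Krein–Milman), which gives the theorem.
-/

open Set

section Biaffine

variable {𝕜 E F G : Type*} [Ring 𝕜] [PartialOrder 𝕜]
  [AddCommGroup E] [Module 𝕜 E] [AddCommGroup F] [Module 𝕜 F] [AddCommGroup G] [Module 𝕜 G]

theorem image2_convexHull_subset_convexHull_image2 {f : E → F → G}
    (hf₁ : ∀ b, ∃ g : E →ᵃ[𝕜] G, ⇑g = (f · b)) (hf₂ : ∀ a, ∃ g : F →ᵃ[𝕜] G, ⇑g = f a)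
    (s : Set E) (t : Set F) :
    image2 f (convexHull 𝕜 s) (convexHull 𝕜 t) ⊆ convexHull 𝕜 (image2 f s t) := by
  rintro _ ⟨a, ha, b, hb, rfl⟩
  have hleft : ∀ b' ∈ t, f a b' ∈ convexHull 𝕜 (image2 f s t) := by
    intro b' hb'
    obtain ⟨g, hg⟩ := hf₁ b'
    have hga : g a ∈ convexHull 𝕜 (g '' s) := g.image_convexHull s ▸ mem_image_of_mem g ha
    rw [hg] at hga
    exact convexHull_mono (image_subset_image2_left hb') hga
  obtain ⟨g, hg⟩ := hf₂ a
  have hgb : g b ∈ convexHull 𝕜 (g '' t) := g.image_convexHull t ▸ mem_image_of_mem g hb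
  rw [hg] at hgb
  exact convexHull_min (image_subset_iff.2 hleft) (convex_convexHull 𝕜 _) hgb

theorem convexHull_image2_convexHull {f : E → F → G}
    (hf₁ : ∀ b, ∃ g : E →ᵃ[𝕜] G, ⇑g = (f · b)) (hf₂ : ∀ a, ∃ g : F →ᵃ[𝕜] G, ⇑g = f a)
    (s : Set E) (t : Set F) :
    convexHull 𝕜 (image2 f (convexHull 𝕜 s) (convexHull 𝕜 t)) = convexHull 𝕜 (image2 f s t) :=
  (convexHull_min (image2_convexHull_subset_convexHull_image2 hf₁ hf₂ s t)
    (convex_convexHull 𝕜 _)).antisymm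
    (convexHull_mono (image2_subset (subset_convexHull 𝕜 s) (subset_convexHull 𝕜 t)))

end Biaffine

theorem Set.Finite.convexHull_extremePoints_convexHull {E : Type*} [AddCommGroup E] [Module ℝ E]
    [TopologicalSpace E] [T2Space E] [IsTopologicalAddGroup E] [ContinuousSMul ℝ E]
    [LocallyConvexSpace ℝ E] {A : Set E} (hA : A.Finite) :
    convexHull ℝ ((convexHull ℝ A).extremePoints ℝ) = convexHull ℝ A := by
  have hclosed : IsClosed (convexHull ℝ ((convexHull ℝ A).extremePoints ℝ)) :=
    (hA.subset extremePoints_convexHull_subset).isClosed_convexHull ℝ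
  rw [← hclosed.closure_eq]
  exact closure_convexHull_extremePoints (hA.isCompact_convexHull ℝ) (convex_convexHull ℝ A)

def mulGraph (a b : ℝ × ℝ) : ℝ × ℝ × ℝ × ℝ × ℝ := (a.1, b.1, a.2, b.2, a.2 * b.2)

theorem image2_mulGraph (A B : Set (ℝ × ℝ)) :
    image2 mulGraph A B = {p : ℝ × ℝ × ℝ × ℝ × ℝ |
      p.2.2.2.2 = p.2.2.1 * p.2.2.2.1 ∧ (p.1, p.2.2.1) ∈ A ∧ (p.2.1, p.2.2.2.1) ∈ B} := by
  ext ⟨x₁, x₂, t₁, t₂, μ⟩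
  constructor
  · rintro ⟨a, ha, b, hb, h⟩
    simp only [mulGraph, Prod.mk.injEq] at h
    obtain ⟨rfl, rfl, rfl, rfl, rfl⟩ := h
    exact ⟨rfl, ha, hb⟩
  · rintro ⟨hμ, ha, hb⟩
    exact ⟨_, ha, _, hb, by simp_all [mulGraph]⟩

theorem exists_affineMap_eq_mulGraph_left (b : ℝ × ℝ) :
    ∃ g : ℝ × ℝ →ᵃ[ℝ] ℝ × ℝ × ℝ × ℝ × ℝ, ⇑g = (mulGraph · b) :=
  ⟨AffineMap.fst.prod ((AffineMap.const ℝ _ b.1).prod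
      (AffineMap.snd.prod ((AffineMap.const ℝ _ b.2).prod (b.2 • AffineMap.snd)))),
    by funext a; simp [mulGraph, mul_comm]⟩

theorem exists_affineMap_eq_mulGraph_right (a : ℝ × ℝ) :
    ∃ g : ℝ × ℝ →ᵃ[ℝ] ℝ × ℝ × ℝ × ℝ × ℝ, ⇑g = mulGraph a :=
  ⟨(AffineMap.const ℝ _ a.1).prod (AffineMap.fst.prod
      ((AffineMap.const ℝ _ a.2).prod (AffineMap.snd.prod (a.2 • AffineMap.snd)))),
    by funext b; simp [mulGraph]⟩

theorem bilinear_over_product_of_polytopes_extreme_points_general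
    (V1 V2 : Finset (ℝ × ℝ))
    (P1 P2 : Set (ℝ × ℝ))
    (hP1 : P1 = convexHull ℝ (V1 : Set (ℝ × ℝ)))
    (hP2 : P2 = convexHull ℝ (V2 : Set (ℝ × ℝ))) :
    convexHull ℝ {p : ℝ × ℝ × ℝ × ℝ × ℝ |
        p.2.2.2.2 = p.2.2.1 * p.2.2.2.1 ∧ (p.1, p.2.2.1) ∈ P1 ∧ (p.2.1, p.2.2.2.1) ∈ P2} =
      convexHull ℝ {p : ℝ × ℝ × ℝ × ℝ × ℝ |
        p.2.2.2.2 = p.2.2.1 * p.2.2.2.1 ∧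
          (p.1, p.2.2.1) ∈ Set.extremePoints ℝ P1 ∧
          (p.2.1, p.2.2.2.1) ∈ Set.extremePoints ℝ P2} := by
  have hE1 : convexHull ℝ (P1.extremePoints ℝ) = P1 :=
    hP1 ▸ V1.finite_toSet.convexHull_extremePoints_convexHull
  have hE2 : convexHull ℝ (P2.extremePoints ℝ) = P2 :=
    hP2 ▸ V2.finite_toSet.convexHull_extremePoints_convexHull
  have h := convexHull_image2_convexHull exists_affineMap_eq_mulGraph_left
    exists_affineMap_eq_mulGraph_right (P1.extremePoints ℝ) (P2.extremePoints ℝ)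
  rwa [hE1, hE2, image2_mulGraph, image2_mulGraph] at h

/-- The convex hull of the graph of the bilinear product `t₁ t₂` over a product of two
planar polytopes equals the convex hull of the (finitely many) points of the graph lying
over pairs of extreme points.  Points of `ℝ⁵` are written `(x₁, x₂, t₁, t₂, μ)`. -/
theorem bilinear_over_product_of_polytopes_extreme_points
    (V1 V2 : Finset (ℝ × ℝ)) (hV1 : V1.Nonempty) (hV2 : V2.Nonempty)
    (P1 P2 : Set (ℝ × ℝ))
    (hP1 : P1 = convexHull ℝ (V1 : Set (ℝ × ℝ)))
    (hP2 : P2 = convexHull ℝ (V2 : Set (ℝ × ℝ))) :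
    convexHull ℝ {p : ℝ × ℝ × ℝ × ℝ × ℝ |
        p.2.2.2.2 = p.2.2.1 * p.2.2.2.1 ∧ (p.1, p.2.2.1) ∈ P1 ∧ (p.2.1, p.2.2.2.1) ∈ P2} =
      convexHull ℝ {p : ℝ × ℝ × ℝ × ℝ × ℝ |
        p.2.2.2.2 = p.2.2.1 * p.2.2.2.1 ∧
          (p.1, p.2.2.1) ∈ Set.extremePoints ℝ P1 ∧
          (p.2.1, p.2.2.2.1) ∈ Set.extremePoints ℝ P2} :=
  bilinear_over_product_of_polytopes_extreme_points_general V1 V2 P1 P2 hP1 hP2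
end

section
/- Let D ⊂ ℝ² be a bounded set and let H be a planar axis-aligned region with D ⊆ H. Then conv{(x₁,x₂,μ) ∈ ℝ³ : μ = x₁x₂, (x₁,x₂) ∈ H} = conv{(v₁,v₂,μ) ∈ ℝ³ : μ = v₁v₂, (v₁,v₂) ∈ corner(H)}. In particular, this set is a polyhedral (finitely generated) convex relaxation of {(x₁,x₂,μ) : μ = x₁x₂, (x₁,x₂) ∈ D}. -/
/-
The graph `v ↦ (v₁, v₂, v₁v₂)` is affine along each coordinate axis. Hence over a rectangle it lies
in the convex hull of its values at the four vertices, so the hull over `H` is the hull of finitely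
many points, a polytope. An extreme point of it cannot lie over a point whose first (or second)
coordinate is interior to a segment of the corresponding slice of `H`, since along that segment the
graph is affine; so extreme points lie over corner points. Krein–Milman then generates the hull by
the corner points, which are finitely many because their coordinates are rectangle endpoints.
-/

/-- A planar axis-aligned region: a finite union of closed axis-aligned rectangles. -/
def IsPlanarAxisAligned (H : Set (ℝ × ℝ)) : Prop :=
  ∃ R : Finset ((ℝ × ℝ) × (ℝ × ℝ)),
    (∀ r ∈ R, r.1.1 ≤ r.2.1 ∧ r.1.2 ≤ r.2.2) ∧
    H = ⋃ r ∈ R, Set.Icc r.1.1 r.2.1 ×ˢ Set.Icc r.1.2 r.2.2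

/-- The corner points of a planar region `H`: points of `H` each of whose coordinates is an
extreme point of the convex hull of the corresponding axis-parallel slice of `H`. -/
def cornerSet (H : Set (ℝ × ℝ)) : Set (ℝ × ℝ) :=
  {v | v ∈ H ∧
    v.1 ∈ Set.extremePoints ℝ (convexHull ℝ {x1 : ℝ | (x1, v.2) ∈ H}) ∧
    v.2 ∈ Set.extremePoints ℝ (convexHull ℝ {x2 : ℝ | (v.1, x2) ∈ H})}

open Set Function

section ExtremePoints

variable {𝕜 E F : Type*}

theorem mem_extremePoints_convexHull_of_map_mem [Ring 𝕜] [PartialOrder 𝕜] [IsOrderedRing 𝕜]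
    [AddCommGroup E] [Module 𝕜 E] [AddCommGroup F] [Module 𝕜 F] (f : E →ᵃ[𝕜] F) (hf : Injective f)
    {s : Set E} {t : Set F} (hst : f '' s ⊆ t) {x : E} (hx : x ∈ convexHull 𝕜 s)
    (hfx : f x ∈ (convexHull 𝕜 t).extremePoints 𝕜) : x ∈ (convexHull 𝕜 s).extremePoints 𝕜 := by
  refine ⟨hx, fun x₁ hx₁ x₂ hx₂ hseg => hf ?_⟩
  have hmaps : f '' convexHull 𝕜 s ⊆ convexHull 𝕜 t :=
    f.image_convexHull s ▸ convexHull_mono hst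
  exact hfx.2 (hmaps (mem_image_of_mem f hx₁)) (hmaps (mem_image_of_mem f hx₂))
    (image_openSegment 𝕜 f x₁ x₂ ▸ mem_image_of_mem f hseg)

theorem eq_or_eq_of_mem_extremePoints_of_mem_Icc [Field 𝕜] [LinearOrder 𝕜]
    [IsStrictOrderedRing 𝕜] {s : Set 𝕜} {a b x : 𝕜} (hx : x ∈ s.extremePoints 𝕜) (ha : a ∈ s)
    (hb : b ∈ s) (hxab : x ∈ Icc a b) : x = a ∨ x = b := by
  by_contra! h
  have hmem : x ∈ Ioo a b :=
    ⟨hxab.1.lt_of_ne (Ne.symm h.1), hxab.2.lt_of_ne h.2⟩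
  exact h.1 (hx.2 ha hb (Ioo_subset_openSegment hmem)).symm

theorem convexHull_eq_convexHull_of_extremePoints_subset [AddCommGroup E] [Module ℝ E]
    [TopologicalSpace E] [T2Space E] [IsTopologicalAddGroup E] [ContinuousSMul ℝ E]
    [LocallyConvexSpace ℝ E] {s t : Set E} (hs : IsCompact (convexHull ℝ s)) (ht : t.Finite)
    (hts : t ⊆ s) (hext : (convexHull ℝ s).extremePoints ℝ ⊆ t) :
    convexHull ℝ s = convexHull ℝ t := by
  refine (convexHull_mono hts).antisymm' ?_
  calc convexHull ℝ s
      = closure (convexHull ℝ ((convexHull ℝ s).extremePoints ℝ)) :=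
        (closure_convexHull_extremePoints hs (convex_convexHull ℝ s)).symm
    _ ⊆ closure (convexHull ℝ t) := closure_mono (convexHull_mono hext)
    _ = convexHull ℝ t := (ht.isClosed_convexHull ℝ).closure_eq

end ExtremePoints

def bilinearGraph (v : ℝ × ℝ) : ℝ × ℝ × ℝ := (v.1, v.2, v.1 * v.2)

theorem setOf_eq_image_bilinearGraph (S : Set (ℝ × ℝ)) :
    {p : ℝ × ℝ × ℝ | p.2.2 = p.1 * p.2.1 ∧ (p.1, p.2.1) ∈ S} = bilinearGraph '' S := by
  ext ⟨x, y, z⟩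
  simp only [mem_ofPred_eq, mem_image, bilinearGraph, Prod.exists, Prod.mk.injEq]
  constructor
  · rintro ⟨rfl, hS⟩
    exact ⟨x, y, hS, rfl, rfl, rfl⟩
  · rintro ⟨x, y, hS, rfl, rfl, rfl⟩
    exact ⟨rfl, hS⟩

def bilinearGraphFst (y : ℝ) : ℝ →ᵃ[ℝ] ℝ × ℝ × ℝ := AffineMap.lineMap (0, y, 0) (1, y, y)

def bilinearGraphSnd (x : ℝ) : ℝ →ᵃ[ℝ] ℝ × ℝ × ℝ := AffineMap.lineMap (x, 0, 0) (x, 1, x)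

@[simp]
theorem bilinearGraphFst_apply (y t : ℝ) : bilinearGraphFst y t = bilinearGraph (t, y) := by
  simp [bilinearGraphFst, bilinearGraph, AffineMap.lineMap_apply_module']

@[simp]
theorem bilinearGraphSnd_apply (x t : ℝ) : bilinearGraphSnd x t = bilinearGraph (x, t) := by
  simp [bilinearGraphSnd, bilinearGraph, AffineMap.lineMap_apply_module', mul_comm]

theorem bilinearGraphFst_injective (y : ℝ) : Injective (bilinearGraphFst y) := fun s t h => by
  simpa [bilinearGraph] using congrArg Prod.fst h

theorem bilinearGraphSnd_injective (x : ℝ) : Injective (bilinearGraphSnd x) := fun s t h => by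
  simpa [bilinearGraph] using congrArg (fun p => p.2.1) h

theorem bilinearGraph_mem_segment_fst {a b x : ℝ} (y : ℝ) (hx : x ∈ Icc a b) :
    bilinearGraph (x, y) ∈ segment ℝ (bilinearGraph (a, y)) (bilinearGraph (b, y)) := by
  have h := mem_image_of_mem (bilinearGraphFst y) (Icc_subset_segment (𝕜 := ℝ) hx)
  rw [image_segment] at h
  simpa only [bilinearGraphFst_apply] using h

theorem bilinearGraph_mem_segment_snd {c d y : ℝ} (x : ℝ) (hy : y ∈ Icc c d) :
    bilinearGraph (x, y) ∈ segment ℝ (bilinearGraph (x, c)) (bilinearGraph (x, d)) := by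
  have h := mem_image_of_mem (bilinearGraphSnd x) (Icc_subset_segment (𝕜 := ℝ) hy)
  rw [image_segment] at h
  simpa only [bilinearGraphSnd_apply] using h

theorem bilinearGraph_mem_convexHull_corners {a b c d x y : ℝ} (hx : x ∈ Icc a b)
    (hy : y ∈ Icc c d) :
    bilinearGraph (x, y) ∈ convexHull ℝ (bilinearGraph '' ({a, b} ×ˢ {c, d})) := by
  set K := convexHull ℝ (bilinearGraph '' ({a, b} ×ˢ {c, d}))
  have hK : Convex ℝ K := convex_convexHull ℝ _
  have hcorner : ∀ u ∈ ({a, b} : Set ℝ), ∀ w ∈ ({c, d} : Set ℝ), bilinearGraph (u, w) ∈ K :=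
    fun u hu w hw => subset_convexHull ℝ _ (mem_image_of_mem _ (mk_mem_prod hu hw))
  have hedge : ∀ w ∈ ({c, d} : Set ℝ), bilinearGraph (x, w) ∈ K := fun w hw =>
    hK.segment_subset (hcorner a (by simp) w hw) (hcorner b (by simp) w hw)
      (bilinearGraph_mem_segment_fst w hx)
  exact hK.segment_subset (hedge c (by simp)) (hedge d (by simp))
    (bilinearGraph_mem_segment_snd x hy)

theorem mem_cornerSet_of_mem_extremePoints {H : Set (ℝ × ℝ)} {v : ℝ × ℝ} (hv : v ∈ H)
    (hext : bilinearGraph v ∈ (convexHull ℝ (bilinearGraph '' H)).extremePoints ℝ) :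
    v ∈ cornerSet H := by
  refine ⟨hv, ?_, ?_⟩
  · refine mem_extremePoints_convexHull_of_map_mem (bilinearGraphFst v.2)
      (bilinearGraphFst_injective v.2) ?_ (subset_convexHull ℝ _ hv) (by simpa using hext)
    rintro _ ⟨t, ht, rfl⟩
    exact ⟨_, ht, (bilinearGraphFst_apply _ _).symm⟩
  · refine mem_extremePoints_convexHull_of_map_mem (bilinearGraphSnd v.1)
      (bilinearGraphSnd_injective v.1) ?_ (subset_convexHull ℝ _ hv) (by simpa using hext)
    rintro _ ⟨t, ht, rfl⟩
    exact ⟨_, ht, (bilinearGraphSnd_apply _ _).symm⟩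

theorem extremePoints_convexHull_image_bilinearGraph_subset (H : Set (ℝ × ℝ)) :
    (convexHull ℝ (bilinearGraph '' H)).extremePoints ℝ ⊆ bilinearGraph '' cornerSet H := by
  intro p hp
  obtain ⟨v, hv, rfl⟩ := extremePoints_convexHull_subset hp
  exact mem_image_of_mem _ (mem_cornerSet_of_mem_extremePoints hv hp)

def rectangleGrid (R : Finset ((ℝ × ℝ) × (ℝ × ℝ))) : Set (ℝ × ℝ) :=
  (⋃ r ∈ R, {r.1.1, r.2.1}) ×ˢ (⋃ r ∈ R, {r.1.2, r.2.2})

theorem rectangleGrid_finite (R : Finset ((ℝ × ℝ) × (ℝ × ℝ))) : (rectangleGrid R).Finite :=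
  (R.finite_toSet.biUnion fun _ _ => toFinite _).prod
    (R.finite_toSet.biUnion fun _ _ => toFinite _)

section UnionOfRectangles

variable {R : Finset ((ℝ × ℝ) × (ℝ × ℝ))} {H : Set (ℝ × ℝ)}
  (hH : H = ⋃ r ∈ R, Icc r.1.1 r.2.1 ×ˢ Icc r.1.2 r.2.2)
include hH

theorem mk_mem_of_eq_biUnion_rectangles {r : (ℝ × ℝ) × (ℝ × ℝ)} (hr : r ∈ R) {x y : ℝ}
    (hx : x ∈ Icc r.1.1 r.2.1) (hy : y ∈ Icc r.1.2 r.2.2) : (x, y) ∈ H :=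
  hH ▸ mem_biUnion hr (mk_mem_prod hx hy)

theorem image_bilinearGraph_subset_convexHull_grid :
    bilinearGraph '' H ⊆ convexHull ℝ (bilinearGraph '' (H ∩ rectangleGrid R)) := by
  rintro _ ⟨⟨x, y⟩, hxy, rfl⟩
  obtain ⟨r, hr, hx, hy⟩ := mem_iUnion₂.1 (hH ▸ hxy)
  refine convexHull_mono (image_mono ?_) (bilinearGraph_mem_convexHull_corners hx hy)
  rintro ⟨u, w⟩ ⟨hu, hw⟩
  have huI : u ∈ Icc r.1.1 r.2.1 := by
    rcases hu with rfl | rfl <;> simp [hx.1.trans hx.2]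
  have hwI : w ∈ Icc r.1.2 r.2.2 := by
    rcases hw with rfl | rfl <;> simp [hy.1.trans hy.2]
  exact ⟨mk_mem_of_eq_biUnion_rectangles hH hr huI hwI, mem_biUnion hr hu, mem_biUnion hr hw⟩

theorem cornerSet_subset_rectangleGrid : cornerSet H ⊆ rectangleGrid R := by
  rintro ⟨x, y⟩ ⟨hv, hx, hy⟩
  obtain ⟨r, hr, hxr, hyr⟩ := mem_iUnion₂.1 (hH ▸ hv)
  have hab := hxr.1.trans hxr.2
  have hcd := hyr.1.trans hyr.2
  refine ⟨mem_biUnion hr (eq_or_eq_of_mem_extremePoints_of_mem_Icc hx ?_ ?_ hxr),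
    mem_biUnion hr (eq_or_eq_of_mem_extremePoints_of_mem_Icc hy ?_ ?_ hyr)⟩ <;>
    refine subset_convexHull ℝ _ (mk_mem_of_eq_biUnion_rectangles hH hr ?_ ?_) <;>
    simp [hab, hcd, hxr, hyr]

end UnionOfRectangles

theorem bilinear_over_axis_aligned_region_corner_generated_general
    (D H : Set (ℝ × ℝ))
    (hH : IsPlanarAxisAligned H) (hDH : D ⊆ H) :
    convexHull ℝ {p : ℝ × ℝ × ℝ | p.2.2 = p.1 * p.2.1 ∧ (p.1, p.2.1) ∈ H} =
      convexHull ℝ {p : ℝ × ℝ × ℝ | p.2.2 = p.1 * p.2.1 ∧ (p.1, p.2.1) ∈ cornerSet H} ∧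
    Set.Finite {p : ℝ × ℝ × ℝ | p.2.2 = p.1 * p.2.1 ∧ (p.1, p.2.1) ∈ cornerSet H} ∧
    {p : ℝ × ℝ × ℝ | p.2.2 = p.1 * p.2.1 ∧ (p.1, p.2.1) ∈ D} ⊆
      convexHull ℝ {p : ℝ × ℝ × ℝ | p.2.2 = p.1 * p.2.1 ∧ (p.1, p.2.1) ∈ H} := by
  obtain ⟨R, -, hHR⟩ := hH
  simp only [setOf_eq_image_bilinearGraph]
  have hcorner : (cornerSet H).Finite :=
    (rectangleGrid_finite R).subset (cornerSet_subset_rectangleGrid hHR)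
  have hgrid : convexHull ℝ (bilinearGraph '' H) =
      convexHull ℝ (bilinearGraph '' (H ∩ rectangleGrid R)) :=
    (convexHull_min (image_bilinearGraph_subset_convexHull_grid hHR)
      (convex_convexHull ℝ _)).antisymm (convexHull_mono (image_mono inter_subset_left))
  have hcompact : IsCompact (convexHull ℝ (bilinearGraph '' H)) :=
    hgrid ▸ (((rectangleGrid_finite R).inter_of_right H).image _).isCompact_convexHull ℝ
  exact ⟨convexHull_eq_convexHull_of_extremePoints_subset hcompact (hcorner.image _)
      (image_mono fun _ hv => hv.1) (extremePoints_convexHull_image_bilinearGraph_subset H),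
    hcorner.image _, (image_mono hDH).trans (subset_convexHull ℝ _)⟩

/-- The convex hull of the graph of `x₁x₂` over an axis-aligned outer approximation `H` of a
bounded set `D` is generated by the finitely many corner points of `H`; in particular it is a
polyhedral (finitely generated) convex relaxation of the graph of `x₁x₂` over `D`. -/
theorem bilinear_over_axis_aligned_region_corner_generated
    (D H : Set (ℝ × ℝ)) (hD : Bornology.IsBounded D)
    (hH : IsPlanarAxisAligned H) (hDH : D ⊆ H) :
    convexHull ℝ {p : ℝ × ℝ × ℝ | p.2.2 = p.1 * p.2.1 ∧ (p.1, p.2.1) ∈ H} =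
      convexHull ℝ {p : ℝ × ℝ × ℝ | p.2.2 = p.1 * p.2.1 ∧ (p.1, p.2.1) ∈ cornerSet H} ∧
    Set.Finite {p : ℝ × ℝ × ℝ | p.2.2 = p.1 * p.2.1 ∧ (p.1, p.2.1) ∈ cornerSet H} ∧
    {p : ℝ × ℝ × ℝ | p.2.2 = p.1 * p.2.1 ∧ (p.1, p.2.1) ∈ D} ⊆
      convexHull ℝ {p : ℝ × ℝ × ℝ | p.2.2 = p.1 * p.2.1 ∧ (p.1, p.2.1) ∈ H} :=
  bilinear_over_axis_aligned_region_corner_generated_general D H hH hDH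
end

section
/- Let H be a nonempty planar axis-aligned region and let ℓ : ℝ² → ℝ be a bilinear function, i.e. ℓ(x₁,x₂) = a + b x₁ + c x₂ + d x₁x₂ for some reals a,b,c,d. Then for every x ∈ H, the point (x, ℓ(x)) ∈ ℝ³ lies in the convex hull of the finite set {(v, ℓ(v)) : v ∈ corner(H)}. -/
/-!
Write `G v = (v, ℓ v)`. Since `ℓ` is affine along every axis-parallel line, `G` maps the
rectangles of `H` into the convex hull of the images of their vertices, so `conv (G '' H)` is
the hull of finitely many points and hence compact; by Krein–Milman it is the closed convex hull
of its extreme points. An extreme point `G v` has `v ∈ H`, and if a coordinate of `v` lay strictly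
inside the hull of its slice, `G v` would lie strictly inside a segment between two points of
`G '' H`; so `v` is a corner. Corners are vertices of the rectangles, hence finitely many.
-/

open Set

theorem convexHull_subset_convexHull_of_extremePoints_subset {E : Type*} [AddCommGroup E]
    [Module ℝ E] [TopologicalSpace E] [T2Space E] [IsTopologicalAddGroup E]
    [ContinuousSMul ℝ E] [LocallyConvexSpace ℝ E] {s t : Set E}
    (hs : IsCompact (convexHull ℝ s)) (ht : IsClosed (convexHull ℝ t))
    (hst : (convexHull ℝ s).extremePoints ℝ ⊆ t) :
    convexHull ℝ s ⊆ convexHull ℝ t := by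
  rw [← closure_convexHull_extremePoints hs (convex_convexHull ℝ s)]
  exact closure_minimal (convexHull_mono hst) ht

section Real

variable {S : Set ℝ} {x : ℝ}

theorem exists_lt_lt_of_notMem_extremePoints_convexHull (hx : x ∈ S)
    (h : x ∉ (convexHull ℝ S).extremePoints ℝ) : ∃ p ∈ S, ∃ q ∈ S, p < x ∧ x < q := by
  rw [mem_extremePoints] at h
  push Not at h
  obtain ⟨y, hy, z, hz, hxyz, hne⟩ := h (subset_convexHull ℝ S hx)
  have hyz : y ≠ z := by
    rintro rfl
    rw [openSegment_same, mem_singleton_iff] at hxyz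
    exact hne hxyz.symm hxyz.symm
  rw [openSegment_eq_Ioo' hyz] at hxyz
  have below : ∃ p ∈ S, p < x := by
    by_contra! hS
    have hsub := convexHull_min hS (convex_Ici (𝕜 := ℝ) x)
    exact hxyz.1.not_ge (le_min (hsub hy) (hsub hz))
  have above : ∃ q ∈ S, x < q := by
    by_contra! hS
    have hsub := convexHull_min hS (convex_Iic (𝕜 := ℝ) x)
    exact hxyz.2.not_ge (max_le (hsub hy) (hsub hz))
  obtain ⟨p, hp, hpx⟩ := below
  obtain ⟨q, hq, hxq⟩ := above
  exact ⟨p, hp, q, hq, hpx, hxq⟩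

theorem eq_or_eq_of_mem_extremePoints_convexHull {m M : ℝ}
    (hx : x ∈ (convexHull ℝ S).extremePoints ℝ) (hS : Icc m M ⊆ S) (hxI : x ∈ Icc m M) :
    x = m ∨ x = M := by
  by_contra! h
  have hmM : m ≤ M := hxI.1.trans hxI.2
  have hseg : x ∈ openSegment ℝ m M := by
    rw [openSegment_eq_Ioo ((hxI.1.lt_of_ne h.1.symm).trans_le hxI.2)]
    exact ⟨hxI.1.lt_of_ne h.1.symm, hxI.2.lt_of_ne h.2⟩
  exact h.1 (hx.2 (subset_convexHull ℝ S (hS (left_mem_Icc.2 hmM)))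
    (subset_convexHull ℝ S (hS (right_mem_Icc.2 hmM))) hseg).symm

end Real

theorem cornerSet_subset_biUnion_vertices {H : Set (ℝ × ℝ)} {R : Finset ((ℝ × ℝ) × (ℝ × ℝ))}
    (hH : H = ⋃ r ∈ R, Icc r.1.1 r.2.1 ×ˢ Icc r.1.2 r.2.2) :
    cornerSet H ⊆ ⋃ r ∈ R, ({r.1.1, r.2.1} : Set ℝ) ×ˢ ({r.1.2, r.2.2} : Set ℝ) := by
  rintro v ⟨hv, hv₁, hv₂⟩
  have hvR := hv
  rw [hH, mem_iUnion₂] at hvR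
  obtain ⟨r, hr, hr₁, hr₂⟩ := hvR
  have hrH : ∀ w ∈ Icc r.1.1 r.2.1 ×ˢ Icc r.1.2 r.2.2, w ∈ H := fun w hw => by
    rw [hH]; exact mem_iUnion₂.2 ⟨r, hr, hw⟩
  exact mem_iUnion₂.2 ⟨r, hr,
    eq_or_eq_of_mem_extremePoints_convexHull hv₁ (fun t ht => hrH (t, v.2) ⟨ht, hr₂⟩) hr₁,
    eq_or_eq_of_mem_extremePoints_convexHull hv₂ (fun t ht => hrH (v.1, t) ⟨hr₁, ht⟩) hr₂⟩

theorem IsPlanarAxisAligned.finite_cornerSet {H : Set (ℝ × ℝ)} (hH : IsPlanarAxisAligned H) :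
    (cornerSet H).Finite := by
  obtain ⟨R, -, hHR⟩ := hH
  exact (R.finite_toSet.biUnion fun r _ => (toFinite _).prod (toFinite _)).subset
    (cornerSet_subset_biUnion_vertices hHR)

abbrev graphMap (ℓ : ℝ × ℝ → ℝ) (v : ℝ × ℝ) : ℝ × ℝ × ℝ := (v.1, v.2, ℓ v)

theorem graphMap_injective (ℓ : ℝ × ℝ → ℝ) : Function.Injective (graphMap ℓ) :=
  fun _ _ h => Prod.ext (congrArg (fun w => w.1) h) (congrArg (fun w => w.2.1) h)

section Bilinear

variable {a b c d : ℝ} {ℓ : ℝ × ℝ → ℝ} {p q v : ℝ × ℝ}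

theorem graphMap_lineMap (hℓ : ∀ x : ℝ × ℝ, ℓ x = a + b * x.1 + c * x.2 + d * (x.1 * x.2))
    (hpq : p.1 = q.1 ∨ p.2 = q.2) (θ : ℝ) :
    graphMap ℓ (AffineMap.lineMap p q θ) =
      AffineMap.lineMap (graphMap ℓ p) (graphMap ℓ q) θ := by
  have hprod : (q.1 - p.1) * (q.2 - p.2) = 0 := by
    rcases hpq with h | h <;> simp [h]
  simp only [AffineMap.lineMap_apply_module, graphMap, Prod.smul_mk, Prod.mk_add_mk,
    Prod.fst_add, Prod.snd_add, Prod.smul_fst, Prod.smul_snd, smul_eq_mul, hℓ]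
  ext <;> simp only
  -- `ℓ` exceeds its linear interpolation by `d θ (θ - 1) (q.1 - p.1) (q.2 - p.2)`
  linear_combination d * (θ ^ 2 - θ) * hprod

theorem graphMap_mem_segment (hℓ : ∀ x : ℝ × ℝ, ℓ x = a + b * x.1 + c * x.2 + d * (x.1 * x.2))
    (hpq : p.1 = q.1 ∨ p.2 = q.2) (hv : v ∈ segment ℝ p q) :
    graphMap ℓ v ∈ segment ℝ (graphMap ℓ p) (graphMap ℓ q) := by
  rw [segment_eq_image_lineMap] at hv ⊢
  obtain ⟨θ, hθ, rfl⟩ := hv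
  exact ⟨θ, hθ, (graphMap_lineMap hℓ hpq θ).symm⟩

theorem graphMap_mem_openSegment
    (hℓ : ∀ x : ℝ × ℝ, ℓ x = a + b * x.1 + c * x.2 + d * (x.1 * x.2))
    (hpq : p.1 = q.1 ∨ p.2 = q.2) (hv : v ∈ openSegment ℝ p q) :
    graphMap ℓ v ∈ openSegment ℝ (graphMap ℓ p) (graphMap ℓ q) := by
  rw [openSegment_eq_image_lineMap] at hv ⊢
  obtain ⟨θ, hθ, rfl⟩ := hv
  exact ⟨θ, hθ, (graphMap_lineMap hℓ hpq θ).symm⟩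

theorem graphMap_mem_convexHull_vertices
    (hℓ : ∀ x : ℝ × ℝ, ℓ x = a + b * x.1 + c * x.2 + d * (x.1 * x.2))
    (hv : v ∈ Icc p.1 q.1 ×ˢ Icc p.2 q.2) :
    graphMap ℓ v ∈ convexHull ℝ (graphMap ℓ '' (({p.1, q.1} : Set ℝ) ×ˢ ({p.2, q.2} : Set ℝ))) := by
  set K := convexHull ℝ (graphMap ℓ '' (({p.1, q.1} : Set ℝ) ×ˢ ({p.2, q.2} : Set ℝ)))
  have vertex : ∀ s ∈ ({p.1, q.1} : Set ℝ), ∀ t ∈ ({p.2, q.2} : Set ℝ), graphMap ℓ (s, t) ∈ K :=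
    fun s hs t ht => subset_convexHull ℝ _ ⟨(s, t), ⟨hs, ht⟩, rfl⟩
  have onEdge : ∀ t ∈ ({p.2, q.2} : Set ℝ), graphMap ℓ (v.1, t) ∈ K := fun t ht =>
    (convex_convexHull ℝ _).segment_subset (vertex _ (.inl rfl) t ht) (vertex _ (.inr rfl) t ht)
      (graphMap_mem_segment hℓ (.inr rfl) (by
        rw [← Prod.image_mk_segment_left]; exact ⟨v.1, Icc_subset_segment hv.1, rfl⟩))
  exact (convex_convexHull ℝ _).segment_subset (onEdge _ (.inl rfl)) (onEdge _ (.inr rfl))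
    (graphMap_mem_segment hℓ (.inl rfl) (by
      rw [← Prod.image_mk_segment_right]; exact ⟨v.2, Icc_subset_segment hv.2, rfl⟩))

theorem IsPlanarAxisAligned.isCompact_convexHull_image_graphMap {H : Set (ℝ × ℝ)}
    (hH : IsPlanarAxisAligned H)
    (hℓ : ∀ x : ℝ × ℝ, ℓ x = a + b * x.1 + c * x.2 + d * (x.1 * x.2)) :
    IsCompact (convexHull ℝ (graphMap ℓ '' H)) := by
  obtain ⟨R, hR, hHR⟩ := hH
  set F := ⋃ r ∈ R, ({r.1.1, r.2.1} : Set ℝ) ×ˢ ({r.1.2, r.2.2} : Set ℝ)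
  have hFH : F ⊆ H := by
    rw [hHR]
    refine biUnion_mono subset_rfl fun r hr => prod_mono ?_ ?_ <;>
      rintro t (rfl | rfl) <;> simp [(hR r hr).1, (hR r hr).2]
  have hHF : graphMap ℓ '' H ⊆ convexHull ℝ (graphMap ℓ '' F) := by
    rintro _ ⟨v, hv, rfl⟩
    rw [hHR, mem_iUnion₂] at hv
    obtain ⟨r, hr, hvr⟩ := hv
    exact convexHull_mono (image_mono (subset_biUnion_of_mem hr))
      (graphMap_mem_convexHull_vertices hℓ hvr)
  have hF : F.Finite := R.finite_toSet.biUnion fun r _ => (toFinite _).prod (toFinite _)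
  rw [(convexHull_min hHF (convex_convexHull ℝ _)).antisymm
    (convexHull_mono (image_mono hFH))]
  exact (hF.image _).isCompact_convexHull ℝ

theorem graphMap_notMem_extremePoints
    (hℓ : ∀ x : ℝ × ℝ, ℓ x = a + b * x.1 + c * x.2 + d * (x.1 * x.2)) {H : Set (ℝ × ℝ)}
    (hp : p ∈ H) (hq : q ∈ H) (hpq : p.1 = q.1 ∨ p.2 = q.2) (hv : v ∈ openSegment ℝ p q)
    (hpv : p ≠ v) : graphMap ℓ v ∉ (convexHull ℝ (graphMap ℓ '' H)).extremePoints ℝ := fun he =>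
  hpv <| graphMap_injective ℓ <| he.2 (subset_convexHull ℝ _ ⟨p, hp, rfl⟩)
    (subset_convexHull ℝ _ ⟨q, hq, rfl⟩) (graphMap_mem_openSegment hℓ hpq hv)

theorem mem_cornerSet_of_graphMap_mem_extremePoints
    (hℓ : ∀ x : ℝ × ℝ, ℓ x = a + b * x.1 + c * x.2 + d * (x.1 * x.2)) {H : Set (ℝ × ℝ)}
    (hv : v ∈ H) (he : graphMap ℓ v ∈ (convexHull ℝ (graphMap ℓ '' H)).extremePoints ℝ) :
    v ∈ cornerSet H := by
  refine ⟨hv, ?_, ?_⟩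
  · by_contra h
    obtain ⟨p, hp, q, hq, hpv, hvq⟩ := exists_lt_lt_of_notMem_extremePoints_convexHull hv h
    refine graphMap_notMem_extremePoints hℓ hp hq (.inr rfl) ?_
      (fun h => hpv.ne (congrArg Prod.fst h)) he
    rw [← Prod.image_mk_openSegment_left, openSegment_eq_Ioo (hpv.trans hvq)]
    exact ⟨v.1, ⟨hpv, hvq⟩, rfl⟩
  · by_contra h
    obtain ⟨p, hp, q, hq, hpv, hvq⟩ := exists_lt_lt_of_notMem_extremePoints_convexHull hv h
    refine graphMap_notMem_extremePoints hℓ hp hq (.inl rfl) ?_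
      (fun h => hpv.ne (congrArg Prod.snd h)) he
    rw [← Prod.image_mk_openSegment_right, openSegment_eq_Ioo (hpv.trans hvq)]
    exact ⟨v.2, ⟨hpv, hvq⟩, rfl⟩

end Bilinear

theorem bilinear_graph_in_hull_of_corner_points_general
    (H : Set (ℝ × ℝ)) (hH : IsPlanarAxisAligned H)
    (a b c d : ℝ) (ℓ : ℝ × ℝ → ℝ)
    (hℓ : ∀ x : ℝ × ℝ, ℓ x = a + b * x.1 + c * x.2 + d * (x.1 * x.2)) :
    Set.Finite ((fun v : ℝ × ℝ => (v.1, v.2, ℓ v)) '' cornerSet H) ∧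
    ∀ x ∈ H, (x.1, x.2, ℓ x) ∈
      convexHull ℝ ((fun v : ℝ × ℝ => (v.1, v.2, ℓ v)) '' cornerSet H) := by
  have hfin : (graphMap ℓ '' cornerSet H).Finite := hH.finite_cornerSet.image _
  have hext : (convexHull ℝ (graphMap ℓ '' H)).extremePoints ℝ ⊆ graphMap ℓ '' cornerSet H := by
    intro e he
    obtain ⟨v, hv, rfl⟩ := extremePoints_convexHull_subset he
    exact ⟨v, mem_cornerSet_of_graphMap_mem_extremePoints hℓ hv he, rfl⟩
  have hsub := convexHull_subset_convexHull_of_extremePoints_subset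
    (hH.isCompact_convexHull_image_graphMap hℓ) (hfin.isClosed_convexHull ℝ) hext
  exact ⟨hfin, fun x hx => hsub (subset_convexHull ℝ _ ⟨x, hx, rfl⟩)⟩

/-- For a bilinear function `ℓ` on a nonempty planar axis-aligned region `H`, every point of
the graph of `ℓ` over `H` lies in the convex hull of the finite set of graph points over the
corner points of `H`. -/
theorem bilinear_graph_in_hull_of_corner_points
    (H : Set (ℝ × ℝ)) (hne : H.Nonempty) (hH : IsPlanarAxisAligned H)
    (a b c d : ℝ) (ℓ : ℝ × ℝ → ℝ)
    (hℓ : ∀ x : ℝ × ℝ, ℓ x = a + b * x.1 + c * x.2 + d * (x.1 * x.2)) :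
    Set.Finite ((fun v : ℝ × ℝ => (v.1, v.2, ℓ v)) '' cornerSet H) ∧
    ∀ x ∈ H, (x.1, x.2, ℓ x) ∈
      convexHull ℝ ((fun v : ℝ × ℝ => (v.1, v.2, ℓ v)) '' cornerSet H) :=
  bilinear_graph_in_hull_of_corner_points_general H hH a b c d ℓ hℓ
end

section
/- Let H be a nonempty planar axis-aligned region, and for i = 1,2 let u_i, o_i : ℝ → ℝ be affine functions such that u_i(x_i) ≤ o_i(x_i) for every x = (x₁,x₂) ∈ H. Then conv{(x₁,x₂,t₁t₂) : (x₁,x₂) ∈ H and u_i(x_i) ≤ t_i ≤ o_i(x_i) for i = 1,2} = conv{(x₁,x₂,t₁t₂) : (x₁,x₂) ∈ corner(H) and t_i ∈ {u_i(x_i), o_i(x_i)} for i = 1,2}. -/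
open Set

section Segment

variable {E : Type*} [AddCommGroup E] [Module ℝ E]

theorem smul_add_mem_segment (v w : E) {a b s : ℝ} (hs : s ∈ Icc a b) :
    s • v + w ∈ segment ℝ (a • v + w) (b • v + w) := by
  have h := mem_image_of_mem (AffineMap.lineMap w (v + w) : ℝ →ᵃ[ℝ] E)
    (show s ∈ segment ℝ a b by rwa [segment_eq_Icc (hs.1.trans hs.2)])
  rw [image_segment] at h
  simpa [AffineMap.lineMap_apply] using h

theorem smul_add_mem_openSegment (v w : E) {a b s : ℝ} (hs : s ∈ Ioo a b) :
    s • v + w ∈ openSegment ℝ (a • v + w) (b • v + w) := by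
  have h := mem_image_of_mem (AffineMap.lineMap w (v + w) : ℝ →ᵃ[ℝ] E)
    (show s ∈ openSegment ℝ a b by rwa [openSegment_eq_Ioo (hs.1.trans hs.2)])
  rw [image_openSegment] at h
  simpa [AffineMap.lineMap_apply] using h

theorem Convex.apply_mem_of_biaffine {K : Set E} (hK : Convex ℝ K) {φ : ℝ → ℝ → E}
    (h₁ : ∀ t, ∃ v w : E, ∀ s, φ s t = s • v + w) (h₂ : ∀ s, ∃ v w : E, ∀ t, φ s t = t • v + w)
    {a b c d s t : ℝ} (hs : s ∈ Icc a b) (ht : t ∈ Icc c d)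
    (hcorner : ∀ s ∈ ({a, b} : Set ℝ), ∀ t ∈ ({c, d} : Set ℝ), φ s t ∈ K) : φ s t ∈ K := by
  have hedge : ∀ t ∈ ({c, d} : Set ℝ), φ s t ∈ K := by
    intro t ht
    obtain ⟨v, w, hvw⟩ := h₁ t
    have hseg := hK.segment_subset (hcorner a (by simp) t ht) (hcorner b (by simp) t ht)
    simp only [hvw] at hseg ⊢
    exact hseg (smul_add_mem_segment v w hs)
  obtain ⟨v, w, hvw⟩ := h₂ s
  have hseg := hK.segment_subset (hedge c (by simp)) (hedge d (by simp))
  simp only [hvw] at hseg ⊢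
  exact hseg (smul_add_mem_segment v w ht)

end Segment

theorem mem_extremePoints_convexHull_of_forall_notMem_Ioo {s : Set ℝ} {x : ℝ} (hx : x ∈ s)
    (h : ∀ a ∈ s, ∀ b ∈ s, x ∉ Ioo a b) : x ∈ (convexHull ℝ s).extremePoints ℝ := by
  refine mem_extremePoints_iff_left.2 ⟨subset_convexHull ℝ s hx, fun y hy z hz hxyz => ?_⟩
  by_contra hyx
  have hyz : y ≠ z := by
    rintro rfl
    rw [openSegment_same, mem_singleton_iff] at hxyz
    exact hyx hxyz.symm
  rw [openSegment_eq_Ioo' hyz] at hxyz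
  obtain ⟨a, ha, hay⟩ := (concaveOn_id convex_univ).exists_le_of_mem_convexHull (subset_univ s)
    (min_rec' (· ∈ convexHull ℝ s) hy hz)
  obtain ⟨b, hb, hzb⟩ := (convexOn_id convex_univ).exists_ge_of_mem_convexHull (subset_univ s)
    (max_rec' (· ∈ convexHull ℝ s) hy hz)
  exact h a ha b hb ⟨hay.trans_lt hxyz.1, hxyz.2.trans_le hzb⟩

def productGraph (H : Set (ℝ × ℝ)) (F G : Set (ℝ → ℝ)) : Set (ℝ × ℝ × ℝ) :=
  ⋃ f ∈ F, ⋃ g ∈ G, (fun x : ℝ × ℝ => (x.1, x.2, f x.1 * g x.2)) '' H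

section ProductGraph

variable {H H' : Set (ℝ × ℝ)} {F G : Set (ℝ → ℝ)}

theorem mem_productGraph {p : ℝ × ℝ × ℝ} :
    p ∈ productGraph H F G ↔ ∃ x ∈ H, ∃ f ∈ F, ∃ g ∈ G, (x.1, x.2, f x.1 * g x.2) = p := by
  simp only [productGraph, mem_iUnion, mem_image, exists_prop]
  tauto

theorem productGraph_mono (h : H ⊆ H') : productGraph H F G ⊆ productGraph H' F G :=
  biUnion_mono subset_rfl fun _ _ => biUnion_mono subset_rfl fun _ _ => image_mono h

theorem Set.Finite.productGraph (hH : H.Finite) (hF : F.Finite) (hG : G.Finite) :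
    (productGraph H F G).Finite :=
  hF.biUnion fun _ _ => hG.biUnion fun _ _ => hH.image _

theorem extremePoints_convexHull_productGraph_subset
    (hF : ∀ f ∈ F, ∃ c d : ℝ, ∀ x, f x = c * x + d)
    (hG : ∀ g ∈ G, ∃ c d : ℝ, ∀ x, g x = c * x + d) :
    (convexHull ℝ (productGraph H F G)).extremePoints ℝ ⊆ productGraph (cornerSet H) F G := by
  intro p hp
  obtain ⟨x, hx, f, hf, g, hg, rfl⟩ := mem_productGraph.1 (extremePoints_convexHull_subset hp)
  obtain ⟨c, d, hcd⟩ := hF f hf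
  obtain ⟨c', d', hcd'⟩ := hG g hg
  have hmem : ∀ y ∈ H, (y.1, y.2, f y.1 * g y.2) ∈ convexHull ℝ (productGraph H F G) :=
    fun y hy => subset_convexHull ℝ _ (mem_productGraph.2 ⟨y, hy, f, hf, g, hg, rfl⟩)
  refine mem_productGraph.2 ⟨x, ⟨hx, ?_, ?_⟩, f, hf, g, hg, rfl⟩
  · refine mem_extremePoints_convexHull_of_forall_notMem_Ioo hx fun a ha b hb hab => ?_
    have hline : ∀ s,
        (s, x.2, f s * g x.2) = s • ((1 : ℝ), (0 : ℝ), c * g x.2) + (0, x.2, d * g x.2) :=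
      fun s => by ext <;> simp [hcd]; ring
    have heq := hp.2 (hmem (a, x.2) ha) (hmem (b, x.2) hb)
      (by simpa only [hline] using smul_add_mem_openSegment _ _ hab)
    exact hab.1.ne (congrArg Prod.fst heq)
  · refine mem_extremePoints_convexHull_of_forall_notMem_Ioo hx fun a ha b hb hab => ?_
    have hline : ∀ t,
        (x.1, t, f x.1 * g t) = t • ((0 : ℝ), (1 : ℝ), f x.1 * c') + (x.1, 0, f x.1 * d') :=
      fun t => by ext <;> simp [hcd']; ring
    have heq := hp.2 (hmem (x.1, a) ha) (hmem (x.1, b) hb)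
      (by simpa only [hline] using smul_add_mem_openSegment _ _ hab)
    exact hab.1.ne (congrArg (·.2.1) heq)


theorem IsPlanarAxisAligned.exists_finite_productGraph_subset_convexHull
    (hH : IsPlanarAxisAligned H)
    (hF : ∀ f ∈ F, ∃ c d : ℝ, ∀ x, f x = c * x + d)
    (hG : ∀ g ∈ G, ∃ c d : ℝ, ∀ x, g x = c * x + d) :
    ∃ V ⊆ H, V.Finite ∧ productGraph H F G ⊆ convexHull ℝ (productGraph V F G) := by
  obtain ⟨R, hR, rfl⟩ := hH
  refine ⟨⋃ r ∈ R, ({r.1.1, r.2.1} : Set ℝ) ×ˢ ({r.1.2, r.2.2} : Set ℝ), ?_, ?_, ?_⟩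
  · refine biUnion_mono subset_rfl fun r hr => prod_mono ?_ ?_
    · exact pair_subset (left_mem_Icc.2 (hR r hr).1) (right_mem_Icc.2 (hR r hr).1)
    · exact pair_subset (left_mem_Icc.2 (hR r hr).2) (right_mem_Icc.2 (hR r hr).2)
  · exact R.finite_toSet.biUnion fun r _ => toFinite _
  intro p hp
  obtain ⟨x, hx, f, hf, g, hg, rfl⟩ := mem_productGraph.1 hp
  obtain ⟨r, hr, hx₁, hx₂⟩ := mem_iUnion₂.1 hx
  obtain ⟨c, d, hcd⟩ := hF f hf
  obtain ⟨c', d', hcd'⟩ := hG g hg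
  refine (convex_convexHull ℝ _).apply_mem_of_biaffine (φ := fun s t => (s, t, f s * g t))
    (fun t => ⟨(1, 0, c * g t), (0, t, d * g t), fun s => by ext <;> simp [hcd]; ring⟩)
    (fun s => ⟨(0, 1, f s * c'), (s, 0, f s * d'), fun t => by ext <;> simp [hcd']; ring⟩)
    hx₁ hx₂ fun s hs t ht => subset_convexHull ℝ _ (mem_productGraph.2 ?_)
  exact ⟨(s, t), mem_biUnion hr ⟨hs, ht⟩, f, hf, g, hg, rfl⟩

theorem IsPlanarAxisAligned.convexHull_productGraph_cornerSet (hH : IsPlanarAxisAligned H)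
    (hF : ∀ f ∈ F, ∃ c d : ℝ, ∀ x, f x = c * x + d)
    (hG : ∀ g ∈ G, ∃ c d : ℝ, ∀ x, g x = c * x + d) (hFfin : F.Finite) (hGfin : G.Finite) :
    convexHull ℝ (productGraph (cornerSet H) F G) = convexHull ℝ (productGraph H F G) := by
  obtain ⟨V, hVH, hVfin, hsub⟩ := hH.exists_finite_productGraph_subset_convexHull hF hG
  have hV : convexHull ℝ (productGraph V F G) = convexHull ℝ (productGraph H F G) :=
    (convexHull_mono (productGraph_mono hVH)).antisymm (convexHull_min hsub (convex_convexHull ℝ _))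
  refine (convexHull_mono (productGraph_mono fun x hx => hx.1)).antisymm ?_
  calc convexHull ℝ (productGraph H F G)
      = convexHull ℝ ((convexHull ℝ (productGraph H F G)).extremePoints ℝ) := by
        rw [← hV, (hVfin.productGraph hFfin hGfin).convexHull_extremePoints_convexHull]
    _ ⊆ convexHull ℝ (productGraph (cornerSet H) F G) :=
        convexHull_mono (extremePoints_convexHull_productGraph_subset hF hG)

theorem convexHull_relaxation_eq_convexHull_productGraph
    {u1 u2 o1 o2 : ℝ → ℝ} (hle : ∀ x ∈ H, u1 x.1 ≤ o1 x.1 ∧ u2 x.2 ≤ o2 x.2) :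
    convexHull ℝ {p : ℝ × ℝ × ℝ | ∃ x1 x2 t1 t2 : ℝ,
        (x1, x2) ∈ H ∧ u1 x1 ≤ t1 ∧ t1 ≤ o1 x1 ∧ u2 x2 ≤ t2 ∧ t2 ≤ o2 x2 ∧
        p = (x1, x2, t1 * t2)} = convexHull ℝ (productGraph H {u1, o1} {u2, o2}) := by
  refine (convexHull_min ?_ (convex_convexHull ℝ _)).antisymm (convexHull_mono ?_)
  · rintro p ⟨x1, x2, t1, t2, hx, hu1, ho1, hu2, ho2, rfl⟩
    refine (convex_convexHull ℝ _).apply_mem_of_biaffine (φ := fun s t => (x1, x2, s * t))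
      (fun t => ⟨(0, 0, t), (x1, x2, 0), fun s => by ext <;> simp⟩)
      (fun s => ⟨(0, 0, s), (x1, x2, 0), fun t => by ext <;> simp [mul_comm]⟩)
      ⟨hu1, ho1⟩ ⟨hu2, ho2⟩ ?_
    rintro s (rfl | rfl) t (rfl | rfl) <;>
      exact subset_convexHull ℝ _ (mem_productGraph.2 ⟨(x1, x2), hx, _, by simp, _, by simp, rfl⟩)
  · intro p hp
    obtain ⟨x, hx, f, hf, g, hg, rfl⟩ := mem_productGraph.1 hp
    obtain ⟨hle₁, hle₂⟩ := hle x hx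
    refine ⟨x.1, x.2, f x.1, g x.2, hx, ?_⟩
    rcases hf with rfl | rfl <;> rcases hg with rfl | rfl <;> simp [hle₁, hle₂]

theorem productGraph_pair (u1 u2 o1 o2 : ℝ → ℝ) :
    productGraph H {u1, o1} {u2, o2} = {p : ℝ × ℝ × ℝ | ∃ x1 x2 t1 t2 : ℝ,
        (x1, x2) ∈ H ∧ (t1 = u1 x1 ∨ t1 = o1 x1) ∧ (t2 = u2 x2 ∨ t2 = o2 x2) ∧
        p = (x1, x2, t1 * t2)} := by
  ext p
  simp only [mem_productGraph, mem_insert_iff, mem_singleton_iff]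
  constructor
  · rintro ⟨x, hx, f, hf, g, hg, rfl⟩
    refine ⟨x.1, x.2, f x.1, g x.2, hx, ?_, ?_, rfl⟩
    · rcases hf with rfl | rfl <;> simp
    · rcases hg with rfl | rfl <;> simp
  · rintro ⟨x1, x2, t1, t2, hx, ht1 | ht1, ht2 | ht2, rfl⟩ <;> subst ht1 ht2
    exacts [⟨_, hx, u1, .inl rfl, u2, .inl rfl, rfl⟩, ⟨_, hx, u1, .inl rfl, o2, .inr rfl, rfl⟩,
      ⟨_, hx, o1, .inr rfl, u2, .inl rfl, rfl⟩, ⟨_, hx, o1, .inr rfl, o2, .inr rfl, rfl⟩]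

end ProductGraph

theorem product_with_affine_estimators_corner_generated_general
    (H : Set (ℝ × ℝ)) (hH : IsPlanarAxisAligned H)
    (u1 u2 o1 o2 : ℝ → ℝ)
    (hu1 : ∃ c d : ℝ, ∀ x, u1 x = c * x + d)
    (hu2 : ∃ c d : ℝ, ∀ x, u2 x = c * x + d)
    (ho1 : ∃ c d : ℝ, ∀ x, o1 x = c * x + d)
    (ho2 : ∃ c d : ℝ, ∀ x, o2 x = c * x + d)
    (hle : ∀ x ∈ H, u1 x.1 ≤ o1 x.1 ∧ u2 x.2 ≤ o2 x.2) :
    convexHull ℝ {p : ℝ × ℝ × ℝ | ∃ x1 x2 t1 t2 : ℝ,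
        (x1, x2) ∈ H ∧ u1 x1 ≤ t1 ∧ t1 ≤ o1 x1 ∧ u2 x2 ≤ t2 ∧ t2 ≤ o2 x2 ∧
        p = (x1, x2, t1 * t2)} =
      convexHull ℝ {p : ℝ × ℝ × ℝ | ∃ x1 x2 t1 t2 : ℝ,
        (x1, x2) ∈ cornerSet H ∧ (t1 = u1 x1 ∨ t1 = o1 x1) ∧ (t2 = u2 x2 ∨ t2 = o2 x2) ∧
        p = (x1, x2, t1 * t2)} := by
  have hF : ∀ f ∈ ({u1, o1} : Set (ℝ → ℝ)), ∃ c d : ℝ, ∀ x, f x = c * x + d := by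
    rintro f (rfl | rfl) <;> assumption
  have hG : ∀ g ∈ ({u2, o2} : Set (ℝ → ℝ)), ∃ c d : ℝ, ∀ x, g x = c * x + d := by
    rintro g (rfl | rfl) <;> assumption
  rw [convexHull_relaxation_eq_convexHull_productGraph hle,
    ← hH.convexHull_productGraph_cornerSet hF hG (toFinite _) (toFinite _), productGraph_pair]

/-- With affine estimators `uᵢ ≤ oᵢ` over a nonempty planar axis-aligned region `H`, the
convex hull of `{(x, t₁t₂) : x ∈ H, uᵢ(xᵢ) ≤ tᵢ ≤ oᵢ(xᵢ)}` equals the convex hull of the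
finitely many points obtained from corner points of `H` and endpoint choices of `tᵢ`. -/
theorem product_with_affine_estimators_corner_generated
    (H : Set (ℝ × ℝ)) (hne : H.Nonempty) (hH : IsPlanarAxisAligned H)
    (u1 u2 o1 o2 : ℝ → ℝ)
    (hu1 : ∃ c d : ℝ, ∀ x, u1 x = c * x + d)
    (hu2 : ∃ c d : ℝ, ∀ x, u2 x = c * x + d)
    (ho1 : ∃ c d : ℝ, ∀ x, o1 x = c * x + d)
    (ho2 : ∃ c d : ℝ, ∀ x, o2 x = c * x + d)
    (hle : ∀ x ∈ H, u1 x.1 ≤ o1 x.1 ∧ u2 x.2 ≤ o2 x.2) :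
    convexHull ℝ {p : ℝ × ℝ × ℝ | ∃ x1 x2 t1 t2 : ℝ,
        (x1, x2) ∈ H ∧ u1 x1 ≤ t1 ∧ t1 ≤ o1 x1 ∧ u2 x2 ≤ t2 ∧ t2 ≤ o2 x2 ∧
        p = (x1, x2, t1 * t2)} =
      convexHull ℝ {p : ℝ × ℝ × ℝ | ∃ x1 x2 t1 t2 : ℝ,
        (x1, x2) ∈ cornerSet H ∧ (t1 = u1 x1 ∨ t1 = o1 x1) ∧ (t2 = u2 x2 ∨ t2 = o2 x2) ∧
        p = (x1, x2, t1 * t2)} :=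
  product_with_affine_estimators_corner_generated_general H hH u1 u2 o1 o2 hu1 hu2 ho1 ho2 hle
end

section
/- Let H ⊆ ℝⁿ be a nonempty finite union of closed boxes ∏_{i=1}^n [a_i, b_i], and let M₁,…,M_m : ℝⁿ → ℝ be functions that are multilinear in the coordinates, i.e. each M_i is affine in each coordinate x_j when the other coordinates are fixed. Then conv{(x, M₁(x),…,M_m(x)) : x ∈ H} = conv{(v, M₁(v),…,M_m(v)) : v ∈ corner(H)}. -/
/-- `M : ℝⁿ → ℝ` is multilinear in the coordinates: fixing all coordinates except the
`i`-th yields an affine function of the `i`-th coordinate. -/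
def IsCoordinatewiseMultilinear {N : ℕ} (M : (Fin N → ℝ) → ℝ) : Prop :=
  ∀ (i : Fin N) (x : Fin N → ℝ),
    ∃ c d : ℝ, ∀ y : ℝ, M (Function.update x i y) = c * y + d

/-- The corner points of `H ⊆ ℝⁿ`: points of `H` each of whose coordinates is an extreme
point of the convex hull of the corresponding axis-parallel slice of `H`. -/
def piCornerSet {N : ℕ} (H : Set (Fin N → ℝ)) : Set (Fin N → ℝ) :=
  {v | v ∈ H ∧ ∀ i, v i ∈ Set.extremePoints ℝ
    (convexHull ℝ {y : ℝ | Function.update v i y ∈ H})}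

/-! No linear functional separates the graph over `H` from the graph over the corners. Composed
with `x ↦ (x, M x)`, a linear functional `L` is again affine in each coordinate, so if a coordinate
of a point of `H` lies strictly inside its slice of `H`, moving it to a suitable end of the slice
does not decrease `L`; taking the end of larger absolute value when `L` is constant along the slice,
the pair (`L`, `∑ xⱼ²`) even increases lexicographically. Such moves keep every coordinate among
its initial value and the vertex coordinates of the boxes, so a lexicographic maximum exists, and it
is a corner. There are finitely many corners, so their hull is closed and Hahn–Banach applies. -/

open Set Function

section Separation

variable {E : Type*} [TopologicalSpace E] [AddCommGroup E] [Module ℝ E] [IsTopologicalAddGroup E]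
  [ContinuousSMul ℝ E] [LocallyConvexSpace ℝ E] [T2Space E]

theorem Set.Finite.mem_convexHull_of_forall_exists_le {s : Set E} (hs : s.Finite) {p : E}
    (h : ∀ L : StrongDual ℝ E, ∃ q ∈ s, L p ≤ L q) : p ∈ convexHull ℝ s := by
  by_contra hp
  obtain ⟨L, u, hLs, hLp⟩ :=
    geometric_hahn_banach_closed_point (convex_convexHull ℝ s)
      (hs.isClosed_convexHull (𝕜 := ℝ)) hp
  obtain ⟨q, hq, hpq⟩ := h L
  linarith [hLs q (subset_convexHull ℝ s hq)]

end Separation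

theorem extremePoints_convexHull_eq_pair {S : Set ℝ} {a b : ℝ} (ha : IsLeast S a)
    (hb : IsGreatest S b) : extremePoints ℝ (convexHull ℝ S) = {a, b} := by
  have hab : a ≤ b := ha.2 hb.1
  have hS : convexHull ℝ S = Icc a b :=
    (convexHull_min (fun y hy => (⟨ha.2 hy, hb.2 hy⟩ : y ∈ Icc a b)) (convex_Icc a b)).antisymm
      ((segment_eq_Icc hab).ge.trans (segment_subset_convexHull ha.1 hb.1))
  rw [hS, extremePoints_Icc hab]

theorem exists_mem_pair_toLex_lt {c d s a b t : ℝ} (ha : a < t) (hb : t < b) :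
    ∃ y ∈ ({a, b} : Set ℝ), toLex (c * t + d, t ^ 2 + s) < toLex (c * y + d, y ^ 2 + s) := by
  simp only [mem_insert_iff, mem_singleton_iff, exists_eq_or_imp, exists_eq_left,
    Prod.Lex.toLex_lt_toLex]
  rcases lt_trichotomy c 0 with hc | rfl | hc
  · exact Or.inl (Or.inl (by nlinarith))
  · rcases le_or_gt 0 t with ht | ht
    · exact Or.inr (Or.inr ⟨by ring, by nlinarith⟩)
    · exact Or.inl (Or.inr ⟨by ring, by nlinarith⟩)
  · exact Or.inr (Or.inl (by nlinarith))

theorem sum_sq_update {ι : Type*} [Fintype ι] [DecidableEq ι] (z : ι → ℝ) (i : ι) (y : ℝ) :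
    ∑ j, update z i y j ^ 2 = y ^ 2 + ∑ j ∈ Finset.univ \ {i}, z j ^ 2 := by
  rw [← Finset.sum_update_of_mem (Finset.mem_univ i)]
  exact Finset.sum_congr rfl fun j _ => apply_update (fun _ t => t ^ 2) z i y j

theorem update_mem_Icc_iff {ι α : Type*} [DecidableEq ι] [Preorder α] {a b z : ι → α} {i : ι}
    {y : α} :
    update z i y ∈ Icc a b ↔ y ∈ Icc (a i) (b i) ∧ ∀ j ≠ i, z j ∈ Icc (a j) (b j) := by
  simp only [mem_Icc, le_update_iff, update_le_iff]
  grind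

variable {N : ℕ}

theorem IsCoordinatewiseMultilinear.apply_update {M : (Fin N → ℝ) → ℝ}
    (hM : IsCoordinatewiseMultilinear M) (x : Fin N → ℝ) (i : Fin N) (y : ℝ) :
    M (update x i y) = M (update x i 0) + y * (M (update x i 1) - M (update x i 0)) := by
  obtain ⟨c, d, hcd⟩ := hM i x
  rw [hcd, hcd, hcd]
  ring

theorem isCoordinatewiseMultilinear_linearMap_graph {m : ℕ} {M : Fin m → (Fin N → ℝ) → ℝ}
    (hM : ∀ k, IsCoordinatewiseMultilinear (M k)) (L : (Fin N → ℝ) × (Fin m → ℝ) →ₗ[ℝ] ℝ) :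
    IsCoordinatewiseMultilinear fun x => L (x, fun k => M k x) := by
  intro i x
  set f : (Fin N → ℝ) → (Fin N → ℝ) × (Fin m → ℝ) := fun x => (x, fun k => M k x)
  have hline (y : ℝ) :
      f (update x i y) = f (update x i 0) + y • (f (update x i 1) - f (update x i 0)) := by
    refine Prod.ext (funext fun j => ?_) (funext fun k => (hM k).apply_update x i y)
    rcases eq_or_ne j i with rfl | hj
    · simp [f]
    · simp [f, hj]
  refine ⟨L (f (update x i 1) - f (update x i 0)), L (f (update x i 0)), fun y => ?_⟩
  change L (f (update x i y)) = _
  rw [hline, map_add, map_smul, smul_eq_mul]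
  ring

theorem IsCoordinatewiseMultilinear.exists_update_toLex_gt {g : (Fin N → ℝ) → ℝ}
    (hg : IsCoordinatewiseMultilinear g) {z : Fin N → ℝ} {i : Fin N} {a b : ℝ} (ha : a < z i)
    (hb : z i < b) : ∃ y ∈ ({a, b} : Set ℝ),
      toLex (g z, ∑ j, z j ^ 2) < toLex (g (update z i y), ∑ j, update z i y j ^ 2) := by
  obtain ⟨c, d, hcd⟩ := hg i z
  have hz : toLex (g z, ∑ j, z j ^ 2) =
      toLex (c * z i + d, z i ^ 2 + ∑ j ∈ Finset.univ \ {i}, z j ^ 2) := by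
    rw [← hcd, ← sum_sq_update, update_eq_self]
  simpa only [hz, hcd, sum_sq_update] using exists_mem_pair_toLex_lt ha hb

theorem mem_slice_self {H : Set (Fin N → ℝ)} {z : Fin N → ℝ} (hz : z ∈ H) (i : Fin N) :
    z i ∈ {y | update z i y ∈ H} := by
  simpa using hz

theorem IsCompact.slice {H : Set (Fin N → ℝ)} (hH : IsCompact H) (z : Fin N → ℝ) (i : Fin N) :
    IsCompact {y | update z i y ∈ H} :=
  (hH.image (continuous_apply i)).of_isClosed_subset
    (hH.isClosed.preimage (continuous_const.update i continuous_id))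
    fun y hy => ⟨update z i y, hy, update_self i y z⟩

theorem mem_piCornerSet_iff {H : Set (Fin N → ℝ)} (hH : IsCompact H) {v : Fin N → ℝ} :
    v ∈ piCornerSet H ↔ v ∈ H ∧ ∀ i, IsLeast {y | update v i y ∈ H} (v i) ∨
      IsGreatest {y | update v i y ∈ H} (v i) := by
  refine and_congr_right fun hv => forall_congr' fun i => ?_
  obtain ⟨a, ha⟩ := (hH.slice v i).exists_isLeast ⟨v i, mem_slice_self hv i⟩
  obtain ⟨b, hb⟩ := (hH.slice v i).exists_isGreatest ⟨v i, mem_slice_self hv i⟩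
  rw [extremePoints_convexHull_eq_pair ha hb, mem_insert_iff, mem_singleton_iff]
  exact or_congr ⟨(· ▸ ha), (·.unique ha)⟩ ⟨(· ▸ hb), (·.unique hb)⟩

section UnionOfBoxes

variable {H : Set (Fin N → ℝ)} {R : Finset ((Fin N → ℝ) × (Fin N → ℝ))}

def boxGrid (R : Finset ((Fin N → ℝ) × (Fin N → ℝ))) (i : Fin N) : Set ℝ :=
  (fun r : (Fin N → ℝ) × (Fin N → ℝ) => r.1 i) '' R ∪
    (fun r : (Fin N → ℝ) × (Fin N → ℝ) => r.2 i) '' R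

theorem finite_boxGrid (R : Finset ((Fin N → ℝ) × (Fin N → ℝ))) (i : Fin N) :
    (boxGrid R i).Finite :=
  (R.finite_toSet.image _).union (R.finite_toSet.image _)

theorem isCompact_of_eq_biUnion_Icc (hH : H = ⋃ r ∈ R, Icc r.1 r.2) : IsCompact H :=
  hH ▸ R.finite_toSet.isCompact_biUnion fun _ _ => isCompact_Icc

theorem IsLeast.mem_boxGrid (hH : H = ⋃ r ∈ R, Icc r.1 r.2) {z : Fin N → ℝ} {i : Fin N}
    {a : ℝ} (ha : IsLeast {y | update z i y ∈ H} a) : a ∈ boxGrid R i := by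
  subst hH
  obtain ⟨r, hr, hmem⟩ := mem_iUnion₂.1 ha.1
  rw [update_mem_Icc_iff] at hmem
  have hr1 : update z i (r.1 i) ∈ ⋃ r ∈ R, Icc r.1 r.2 :=
    mem_iUnion₂.2 ⟨r, hr, update_mem_Icc_iff.2 ⟨⟨le_rfl, hmem.1.1.trans hmem.1.2⟩, hmem.2⟩⟩
  exact Or.inl ⟨r, hr, le_antisymm hmem.1.1 (ha.2 hr1)⟩

theorem IsGreatest.mem_boxGrid (hH : H = ⋃ r ∈ R, Icc r.1 r.2) {z : Fin N → ℝ} {i : Fin N}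
    {b : ℝ} (hb : IsGreatest {y | update z i y ∈ H} b) : b ∈ boxGrid R i := by
  subst hH
  obtain ⟨r, hr, hmem⟩ := mem_iUnion₂.1 hb.1
  rw [update_mem_Icc_iff] at hmem
  have hr2 : update z i (r.2 i) ∈ ⋃ r ∈ R, Icc r.1 r.2 :=
    mem_iUnion₂.2 ⟨r, hr, update_mem_Icc_iff.2 ⟨⟨hmem.1.1.trans hmem.1.2, le_rfl⟩, hmem.2⟩⟩
  exact Or.inr ⟨r, hr, le_antisymm (hb.2 hr2) hmem.1.2⟩

theorem finite_piCornerSet (hH : H = ⋃ r ∈ R, Icc r.1 r.2) : (piCornerSet H).Finite :=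
  (Finite.pi' fun i => finite_boxGrid R i).subset fun _ hv i =>
    (((mem_piCornerSet_iff (isCompact_of_eq_biUnion_Icc hH)).1 hv).2 i).elim
      (·.mem_boxGrid hH) (·.mem_boxGrid hH)

theorem exists_mem_piCornerSet_le (hH : H = ⋃ r ∈ R, Icc r.1 r.2) {g : (Fin N → ℝ) → ℝ}
    (hg : IsCoordinatewiseMultilinear g) {x : Fin N → ℝ} (hx : x ∈ H) :
    ∃ v ∈ piCornerSet H, g x ≤ g v := by
  have hHc := isCompact_of_eq_biUnion_Icc hH
  -- `F` is closed under the moves of `exists_update_toLex_gt` towards the ends of the slices.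
  set F := {w | w ∈ H ∧ ∀ i, w i ∈ insert (x i) (boxGrid R i)}
  have hF : F.Finite :=
    (Finite.pi' fun i => (finite_boxGrid R i).insert (x i)).subset fun _ hw => hw.2
  have hxF : x ∈ F := ⟨hx, fun i => mem_insert _ _⟩
  obtain ⟨z, ⟨hzH, hzF⟩, hzmax⟩ :=
    exists_max_image F (fun w => toLex (g w, ∑ j, w j ^ 2)) hF ⟨x, hxF⟩
  refine ⟨z, (mem_piCornerSet_iff hHc).2 ⟨hzH, fun i => ?_⟩,
    Prod.Lex.monotone_fst _ _ (hzmax x hxF)⟩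
  obtain ⟨a, ha⟩ := (hHc.slice z i).exists_isLeast ⟨z i, mem_slice_self hzH i⟩
  obtain ⟨b, hb⟩ := (hHc.slice z i).exists_isGreatest ⟨z i, mem_slice_self hzH i⟩
  by_contra! hne
  have hazi : a < z i := (ha.2 (mem_slice_self hzH i)).lt_of_ne fun h => hne.1 (h ▸ ha)
  have hzib : z i < b := (hb.2 (mem_slice_self hzH i)).lt_of_ne' fun h => hne.2 (h ▸ hb)
  obtain ⟨y, hy, hlt⟩ := hg.exists_update_toLex_gt hazi hzib
  have hyH : update z i y ∈ H ∧ y ∈ boxGrid R i := by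
    rcases hy with rfl | rfl
    exacts [⟨ha.1, ha.mem_boxGrid hH⟩, ⟨hb.1, hb.mem_boxGrid hH⟩]
  have hyF : update z i y ∈ F := by
    refine ⟨hyH.1, fun j => ?_⟩
    rcases eq_or_ne j i with rfl | hj
    · simpa using Or.inr hyH.2
    · simpa [hj] using hzF j
  exact (hzmax _ hyF).not_gt hlt

end UnionOfBoxes

theorem simultaneous_hull_over_union_of_boxes_corner_generated_general
    (N : ℕ) (H : Set (Fin N → ℝ))
    (R : Finset ((Fin N → ℝ) × (Fin N → ℝ)))
    (hH : H = ⋃ r ∈ R, Set.Icc r.1 r.2)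
    (m : ℕ) (M : Fin m → (Fin N → ℝ) → ℝ)
    (hM : ∀ i, IsCoordinatewiseMultilinear (M i)) :
    convexHull ℝ ((fun x : Fin N → ℝ => (x, fun i : Fin m => M i x)) '' H) =
      convexHull ℝ
        ((fun v : Fin N → ℝ => (v, fun i : Fin m => M i v)) '' piCornerSet H) := by
  refine (convexHull_min ?_ (convex_convexHull ℝ _)).antisymm
    (convexHull_mono (image_mono fun v hv => hv.1))
  rintro _ ⟨x, hx, rfl⟩
  refine ((finite_piCornerSet hH).image _).mem_convexHull_of_forall_exists_le fun L => ?_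
  obtain ⟨v, hv, hle⟩ :=
    exists_mem_piCornerSet_le hH (isCoordinatewiseMultilinear_linearMap_graph hM L) hx
  exact ⟨_, mem_image_of_mem _ hv, hle⟩

/-- Over a nonempty finite union of closed boxes `H ⊆ ℝⁿ`, the simultaneous convex hull of
finitely many coordinatewise-multilinear functions equals the convex hull of their
simultaneous graph points over the corner points of `H`. -/
theorem simultaneous_hull_over_union_of_boxes_corner_generated
    (N : ℕ) (H : Set (Fin N → ℝ)) (hne : H.Nonempty)
    (R : Finset ((Fin N → ℝ) × (Fin N → ℝ)))
    (hR : ∀ r ∈ R, r.1 ≤ r.2)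
    (hH : H = ⋃ r ∈ R, Set.Icc r.1 r.2)
    (m : ℕ) (M : Fin m → (Fin N → ℝ) → ℝ)
    (hM : ∀ i, IsCoordinatewiseMultilinear (M i)) :
    convexHull ℝ ((fun x : Fin N → ℝ => (x, fun i : Fin m => M i x)) '' H) =
      convexHull ℝ
        ((fun v : Fin N → ℝ => (v, fun i : Fin m => M i v)) '' piCornerSet H) :=
  simultaneous_hull_over_union_of_boxes_corner_generated_general N H R hH m M hM
end

section
/- Let x^L ≤ x^U in ℝⁿ, let g : [x^L,x^U] → ℝ^m be Lipschitz continuous, and suppose C := {x ∈ [x^L,x^U] : g(x) ≤ 0 componentwise} is nonempty. Then for every ε > 0 there exists a set H ⊆ ℝⁿ that is a finite union of closed boxes contained in [x^L,x^U], such that C ⊆ H and d_H(H, C) ≤ ε. -/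
/-- The closed box `[a, b] = {x : aᵢ ≤ xᵢ ≤ bᵢ for all i}` in `ℝⁿ`. -/
def closedBox {n : ℕ} (a b : Fin n → ℝ) : Set (EuclideanSpace ℝ (Fin n)) :=
  {x | ∀ i, a i ≤ x i ∧ x i ≤ b i}

lemma closedBox_isCompact {n : ℕ} (a b : Fin n → ℝ) : IsCompact (closedBox a b) := by
  have h : closedBox a b =
      (EuclideanSpace.equiv (Fin n) ℝ).toHomeomorph ⁻¹'
        (Set.univ.pi fun i => Set.Icc (a i) (b i)) := by
    ext x
    simp [closedBox, Set.mem_pi, Set.mem_Icc, Pi.le_def, forall_and]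
  rw [h, Homeomorph.isCompact_preimage]
  exact isCompact_univ_pi fun i => isCompact_Icc

lemma abs_coord_le_dist {n : ℕ} (x y : EuclideanSpace ℝ (Fin n)) (i : Fin n) :
    |x i - y i| ≤ dist x y := by
  rw [EuclideanSpace.dist_eq, ← Real.dist_eq]
  have h1 : dist (x i) (y i) ^ 2 ≤ ∑ j, dist (x j) (y j) ^ 2 :=
    Finset.single_le_sum (f := fun j => dist (x j) (y j) ^ 2)
      (fun j _ => sq_nonneg _) (Finset.mem_univ i)
  calc dist (x i) (y i) = Real.sqrt (dist (x i) (y i) ^ 2) :=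
        (Real.sqrt_sq dist_nonneg).symm
    _ ≤ Real.sqrt (∑ j, dist (x j) (y j) ^ 2) := Real.sqrt_le_sqrt h1

lemma dist_le_of_coord_le {n : ℕ} (x y : EuclideanSpace ℝ (Fin n)) {δ : ℝ} (hδ : 0 ≤ δ)
    (h : ∀ i, |x i - y i| ≤ δ) : dist x y ≤ Real.sqrt n * δ := by
  rw [EuclideanSpace.dist_eq]
  have h1 : ∑ j, dist (x j) (y j) ^ 2 ≤ (n : ℝ) * δ ^ 2 := by
    calc ∑ j, dist (x j) (y j) ^ 2 ≤ ∑ _j : Fin n, δ ^ 2 := by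
          refine Finset.sum_le_sum fun j _ => ?_
          rw [Real.dist_eq]
          exact pow_le_pow_left₀ (abs_nonneg _) (h j) 2
      _ = (n : ℝ) * δ ^ 2 := by simp [mul_comm]
  calc Real.sqrt (∑ j, dist (x j) (y j) ^ 2) ≤ Real.sqrt ((n : ℝ) * δ ^ 2) :=
        Real.sqrt_le_sqrt h1
    _ = Real.sqrt n * δ := by
        rw [Real.sqrt_mul (Nat.cast_nonneg n), Real.sqrt_sq hδ]

/-- A set `C = {x ∈ [xᴸ, xᵁ] : g(x) ≤ 0}` defined by Lipschitz inequality constraints admits,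
for every `ε > 0`, an outer approximation by a finite union of closed boxes inside the
bounding box whose Hausdorff distance to `C` is at most `ε`. -/
theorem axis_aligned_outer_approximation_of_sublevel_set
    (n m : ℕ) (xL xU : Fin n → ℝ) (hbox : ∀ i, xL i ≤ xU i)
    (g : EuclideanSpace ℝ (Fin n) → EuclideanSpace ℝ (Fin m))
    (K : NNReal) (hg : LipschitzOnWith K g (closedBox xL xU))
    (C : Set (EuclideanSpace ℝ (Fin n)))
    (hC : C = {x ∈ closedBox xL xU | ∀ j, g x j ≤ 0})
    (hCne : C.Nonempty) :
    ∀ ε > (0 : ℝ), ∃ H : Set (EuclideanSpace ℝ (Fin n)),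
      (∃ R : Finset ((Fin n → ℝ) × (Fin n → ℝ)),
        (∀ r ∈ R, ∀ i, r.1 i ≤ r.2 i) ∧ H = ⋃ r ∈ R, closedBox r.1 r.2) ∧
      H ⊆ closedBox xL xU ∧ C ⊆ H ∧ Metric.hausdorffDist H C ≤ ε := by
  intro ε hε
  have hCbox : C ⊆ closedBox xL xU := by rw [hC]; exact fun x hx => hx.1
  -- choose δ
  set δ : ℝ := ε / (Real.sqrt n + 1) with hδdef
  have hsn : (0 : ℝ) ≤ Real.sqrt n := Real.sqrt_nonneg n
  have hδpos : 0 < δ := div_pos hε (by linarith)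
  -- total boundedness
  have htb : TotallyBounded C :=
    TotallyBounded.subset hCbox (closedBox_isCompact xL xU).totallyBounded
  obtain ⟨t, htC, htfin, hcov⟩ := Metric.finite_approx_of_totallyBounded htb δ hδpos
  -- corners of small boxes
  set aF : EuclideanSpace ℝ (Fin n) → (Fin n → ℝ) :=
    fun y i => max (xL i) (y i - δ) with haF
  set bF : EuclideanSpace ℝ (Fin n) → (Fin n → ℝ) :=
    fun y i => min (xU i) (y i + δ) with hbF
  set R : Finset ((Fin n → ℝ) × (Fin n → ℝ)) :=
    htfin.toFinset.image (fun y => (aF y, bF y)) with hR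
  set H : Set (EuclideanSpace ℝ (Fin n)) := ⋃ y ∈ t, closedBox (aF y) (bF y) with hH
  have hHmem : ∀ x, x ∈ H ↔ ∃ y ∈ t, x ∈ closedBox (aF y) (bF y) := by
    intro x; simp [hH]
  -- small boxes around y ∈ t are close to y and inside the big box
  have hyb : ∀ y ∈ t, ∀ x ∈ closedBox (aF y) (bF y),
      x ∈ closedBox xL xU ∧ ∀ i, |x i - y i| ≤ δ := by
    intro y hy x hx
    constructor
    · intro i
      exact ⟨le_trans (le_max_left _ _) (hx i).1,
             le_trans (hx i).2 (min_le_left _ _)⟩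
    · intro i
      have h1 : y i - δ ≤ x i := le_trans (le_max_right _ _) (hx i).1
      have h2 : x i ≤ y i + δ := le_trans (hx i).2 (min_le_right _ _)
      rw [abs_le]; constructor <;> linarith
  -- C ⊆ H
  have hCH : C ⊆ H := by
    intro x hx
    obtain ⟨y, hy, hxy⟩ := Set.mem_iUnion₂.1 (hcov hx)
    have hxb : x ∈ closedBox xL xU := hCbox hx
    refine (hHmem x).2 ⟨y, hy, fun i => ?_⟩
    have hd : |x i - y i| ≤ δ :=
      le_trans (abs_coord_le_dist x y i) (le_of_lt (Metric.mem_ball.1 hxy))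
    rw [abs_le] at hd
    exact ⟨max_le (hxb i).1 (by linarith [hd.1]),
           le_min (hxb i).2 (by linarith [hd.2])⟩
  have hHbox : H ⊆ closedBox xL xU := by
    intro x hx
    obtain ⟨y, hy, hxy⟩ := (hHmem x).1 hx
    exact (hyb y hy x hxy).1
  -- δ√n ≤ ε
  have hkey : Real.sqrt n * δ ≤ ε := by
    rw [hδdef, ← mul_div_assoc, div_le_iff₀ (by linarith)]
    nlinarith [hε, hsn]
  refine ⟨H, ⟨R, ?_, ?_⟩, hHbox, hCH, ?_⟩
  · -- boxes are valid
    intro r hr i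
    rw [hR, Finset.mem_image] at hr
    obtain ⟨y, hy, rfl⟩ := hr
    rw [Set.Finite.mem_toFinset] at hy
    have hyB : y ∈ closedBox xL xU := hCbox (htC hy)
    have h1 : aF y i ≤ y i := max_le (hyB i).1 (by linarith [hδpos.le])
    have h2 : y i ≤ bF y i := le_min (hyB i).2 (by linarith [hδpos.le])
    exact le_trans h1 h2
  · -- H equals union over R
    ext x
    rw [hHmem]
    simp only [Set.mem_iUnion, exists_prop]
    constructor
    · rintro ⟨y, hy, hx⟩
      exact ⟨(aF y, bF y), by
        rw [hR, Finset.mem_image]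
        exact ⟨y, Set.Finite.mem_toFinset _ |>.2 hy, rfl⟩, hx⟩
    · rintro ⟨r, hr, hx⟩
      rw [hR, Finset.mem_image] at hr
      obtain ⟨y, hy, rfl⟩ := hr
      exact ⟨y, (Set.Finite.mem_toFinset _).1 hy, hx⟩
  · -- Hausdorff distance
    refine Metric.hausdorffDist_le_of_mem_dist hε.le ?_ ?_
    · intro x hx
      obtain ⟨y, hy, hxy⟩ := (hHmem x).1 hx
      refine ⟨y, htC hy, ?_⟩
      calc dist x y ≤ Real.sqrt n * δ :=
            dist_le_of_coord_le x y hδpos.le (hyb y hy x hxy).2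
        _ ≤ ε := hkey
    · intro x hx
      exact ⟨x, hCH hx, by simp [hε.le]⟩
end

section
/- Let D ⊆ ℝⁿ be a nonempty bounded set, let f : ℝⁿ → ℝ^k be continuous, and let M₁,…,M_m : ℝ^k → ℝ be continuous functions. Define G := {(x, M₁(f(x)),…,M_m(f(x))) : x ∈ D} and graph(f|_D) := {(x, f(x)) : x ∈ D}. Let (H^ν)_{ν∈ℕ} be nonempty subsets of ℝ^{n+k}, all contained in a common bounded set, with graph(f|_D) ⊆ H^ν for every ν and d_H(H^ν, graph(f|_D)) → 0. Define R^ν := {(x, μ) ∈ ℝ^{n+m} : there exists t ∈ ℝ^k with (x,t) ∈ H^ν and μ_i = M_i(t) for all i ∈ {1,…,m}}. Then for every ν, G ⊆ conv(R^ν), and d_H(conv(R^ν), conv(G)) → 0 as ν → ∞. -/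
/-!
Both `R^ν` and `G` are images of `H^ν` and `graph(f|_D)` under the single map
`Φ (x, t) = (x, M(t))`, which is uniformly continuous on the compact closure of a common bound
for the `H^ν`; so `d_H(R^ν, G) → 0`. Taking convex hulls does not increase Hausdorff distance,
because the closed `r`-neighbourhood of a convex set is convex.
-/

open Filter Metric

section Hausdorff

variable {α β : Type*} [PseudoEMetricSpace α] [PseudoEMetricSpace β]

theorem UniformContinuousOn.hausdorffEDist_image_le {f : α → β} {s : Set α}
    (hf : UniformContinuousOn f s) {ε : ENNReal} (hε : 0 < ε) :
    ∃ δ > 0, ∀ A ⊆ s, ∀ B ⊆ s, hausdorffEDist A B < δ →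
      hausdorffEDist (f '' A) (f '' B) ≤ ε := by
  obtain ⟨δ, hδ, hfδ⟩ := EMetric.uniformContinuousOn_iff.mp hf ε hε
  refine ⟨δ, hδ, fun A hA B hB hAB => ?_⟩
  have close {A B : Set α} (hA : A ⊆ s) (hB : B ⊆ s) (hAB : hausdorffEDist A B < δ) :
      ∀ y ∈ f '' A, ∃ z ∈ f '' B, edist y z ≤ ε := by
    rintro _ ⟨x, hx, rfl⟩
    obtain ⟨x', hx', hxx'⟩ := exists_edist_lt_of_hausdorffEDist_lt hx hAB
    exact ⟨f x', Set.mem_image_of_mem f hx', (hfδ (hA hx) (hB hx') hxx').le⟩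
  exact hausdorffEDist_le_of_mem_edist (close hA hB hAB)
    (close hB hA (by rwa [hausdorffEDist_comm]))

theorem UniformContinuousOn.tendsto_hausdorffEDist_image {ι : Type*} {l : Filter ι}
    {f : α → β} {s : Set α} (hf : UniformContinuousOn f s) {A : ι → Set α} {B : Set α}
    (hA : ∀ i, A i ⊆ s) (hB : B ⊆ s) (h : Tendsto (fun i => hausdorffEDist (A i) B) l (nhds 0)) :
    Tendsto (fun i => hausdorffEDist (f '' A i) (f '' B)) l (nhds 0) := by
  refine ENNReal.tendsto_nhds_zero.mpr fun ε hε => ?_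
  obtain ⟨δ, hδ, hfδ⟩ := hf.hausdorffEDist_image_le hε
  filter_upwards [h.eventually (gt_mem_nhds hδ)] with i hi
  exact hfδ _ (hA i) _ hB hi

end Hausdorff

section Convex

variable {E : Type*} [SeminormedAddCommGroup E] [NormedSpace ℝ E]

theorem infEDist_convexHull_le {s t : Set E} {r : ENNReal} (h : ∀ y ∈ s, infEDist y t ≤ r)
    {x : E} (hx : x ∈ convexHull ℝ s) : infEDist x (convexHull ℝ t) ≤ r := by
  obtain rfl | hr := eq_or_ne r ⊤
  · exact le_top
  have hs : s ⊆ cthickening r.toReal (convexHull ℝ t) := fun y hy =>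
    mem_cthickening_iff.mpr <| by
      rw [ENNReal.ofReal_toReal hr]
      exact (infEDist_anti (subset_convexHull ℝ t)).trans (h y hy)
  simpa [mem_cthickening_iff, ENNReal.ofReal_toReal hr] using
    convexHull_min hs ((convex_convexHull ℝ t).cthickening _) hx

theorem hausdorffEDist_convexHull_le (s t : Set E) :
    hausdorffEDist (convexHull ℝ s) (convexHull ℝ t) ≤ hausdorffEDist s t :=
  hausdorffEDist_le_of_infEDist
    (fun _ hx => infEDist_convexHull_le (fun _ hy => infEDist_le_hausdorffEDist_of_mem hy) hx)
    (fun _ hx => infEDist_convexHull_le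
      (fun _ hy => (infEDist_le_hausdorffEDist_of_mem hy).trans_eq hausdorffEDist_comm) hx)

end Convex

theorem Set.image_prodMap_id {α β γ : Type*} (H : Set (α × β)) (g : β → γ) :
    Prod.map id g '' H = {p | ∃ t, (p.1, t) ∈ H ∧ p.2 = g t} := by
  ext ⟨x, y⟩
  simp [eq_comm]

theorem relaxation_convergence_for_multilinear_compositions_general
    (n k m : ℕ)
    (D : Set (EuclideanSpace ℝ (Fin n))) (hDne : D.Nonempty)
    (f : EuclideanSpace ℝ (Fin n) → EuclideanSpace ℝ (Fin k))
    (M : Fin m → EuclideanSpace ℝ (Fin k) → ℝ) (hM : ∀ i, Continuous (M i))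
    (G : Set (EuclideanSpace ℝ (Fin n) × EuclideanSpace ℝ (Fin m)))
    (hG : G = (fun x => (x, (WithLp.toLp 2 (fun i => M i (f x)) : EuclideanSpace ℝ (Fin m)))) '' D)
    (graphF : Set (EuclideanSpace ℝ (Fin n) × EuclideanSpace ℝ (Fin k)))
    (hgraphF : graphF = (fun x => (x, f x)) '' D)
    (H : ℕ → Set (EuclideanSpace ℝ (Fin n) × EuclideanSpace ℝ (Fin k)))
    (hHbd : ∃ B : Set (EuclideanSpace ℝ (Fin n) × EuclideanSpace ℝ (Fin k)),
      Bornology.IsBounded B ∧ ∀ ν, H ν ⊆ B)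
    (hHsup : ∀ ν, graphF ⊆ H ν)
    (hHconv : Tendsto (fun ν => Metric.hausdorffDist (H ν) graphF) atTop (nhds 0))
    (R : ℕ → Set (EuclideanSpace ℝ (Fin n) × EuclideanSpace ℝ (Fin m)))
    (hR : ∀ ν, R ν = {p | ∃ t : EuclideanSpace ℝ (Fin k),
      (p.1, t) ∈ H ν ∧ ∀ i, p.2 i = M i t}) :
    (∀ ν, G ⊆ convexHull ℝ (R ν)) ∧
      Tendsto (fun ν => Metric.hausdorffDist (convexHull ℝ (R ν)) (convexHull ℝ G))
        atTop (nhds 0) := by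
  set Φ := Prod.map (id : EuclideanSpace ℝ (Fin n) → EuclideanSpace ℝ (Fin n))
    fun t : EuclideanSpace ℝ (Fin k) => (WithLp.toLp 2 fun i => M i t : EuclideanSpace ℝ (Fin m))
  have hRΦ (ν : ℕ) : R ν = Φ '' H ν := by
    rw [hR ν, Set.image_prodMap_id]
    simp [PiLp.ext_iff]
  have hGΦ : G = Φ '' graphF := by rw [hG, hgraphF, Set.image_image]; rfl
  have hGR (ν : ℕ) : G ⊆ R ν := by rw [hGΦ, hRΦ ν]; exact Set.image_mono (hHsup ν)
  refine ⟨fun ν => (hGR ν).trans (subset_convexHull ℝ _), ?_⟩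
  obtain ⟨B, hBbd, hBsub⟩ := hHbd
  have hΦ : UniformContinuousOn Φ (closure B) :=
    hBbd.isCompact_closure.uniformContinuousOn_of_continuous (by fun_prop)
  have hFne : graphF.Nonempty := hgraphF ▸ hDne.image _
  have hfin (ν : ℕ) : hausdorffEDist (H ν) graphF ≠ ⊤ :=
    hausdorffEDist_ne_top_of_nonempty_of_bounded (hFne.mono (hHsup ν)) hFne
      (hBbd.subset (hBsub ν)) (hBbd.subset ((hHsup 0).trans (hBsub 0)))
  have hHedist := (ENNReal.tendsto_toReal_iff hfin ENNReal.zero_ne_top).mp hHconv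
  have hRG := hΦ.tendsto_hausdorffEDist_image (fun ν => (hBsub ν).trans subset_closure)
    ((hHsup 0).trans ((hBsub 0).trans subset_closure)) hHedist
  simp only [← hRΦ, ← hGΦ] at hRG
  have hconv := tendsto_of_tendsto_of_tendsto_of_le_of_le tendsto_const_nhds hRG
    (fun _ => zero_le) (fun ν => hausdorffEDist_convexHull_le (R ν) G)
  simpa [Function.comp_def, hausdorffDist] using
    (ENNReal.tendsto_toReal ENNReal.zero_ne_top).comp hconv

/-- Convergence of the polyhedral relaxations: if axis-aligned (or any) outer approximations
`H^ν` of the graph of the inner functions converge to that graph in Hausdorff distance, then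
the induced relaxations `conv(R^ν)` of the multilinear-composition graph `G` contain `G` and
converge in Hausdorff distance to `conv(G)`. -/
theorem relaxation_convergence_for_multilinear_compositions
    (n k m : ℕ)
    (D : Set (EuclideanSpace ℝ (Fin n))) (hDne : D.Nonempty)
    (hDbd : Bornology.IsBounded D)
    (f : EuclideanSpace ℝ (Fin n) → EuclideanSpace ℝ (Fin k)) (hf : Continuous f)
    (M : Fin m → EuclideanSpace ℝ (Fin k) → ℝ) (hM : ∀ i, Continuous (M i))
    (G : Set (EuclideanSpace ℝ (Fin n) × EuclideanSpace ℝ (Fin m)))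
    (hG : G = (fun x => (x, (WithLp.toLp 2 (fun i => M i (f x)) : EuclideanSpace ℝ (Fin m)))) '' D)
    (graphF : Set (EuclideanSpace ℝ (Fin n) × EuclideanSpace ℝ (Fin k)))
    (hgraphF : graphF = (fun x => (x, f x)) '' D)
    (H : ℕ → Set (EuclideanSpace ℝ (Fin n) × EuclideanSpace ℝ (Fin k)))
    (hHne : ∀ ν, (H ν).Nonempty)
    (hHbd : ∃ B : Set (EuclideanSpace ℝ (Fin n) × EuclideanSpace ℝ (Fin k)),
      Bornology.IsBounded B ∧ ∀ ν, H ν ⊆ B)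
    (hHsup : ∀ ν, graphF ⊆ H ν)
    (hHconv : Tendsto (fun ν => Metric.hausdorffDist (H ν) graphF) atTop (nhds 0))
    (R : ℕ → Set (EuclideanSpace ℝ (Fin n) × EuclideanSpace ℝ (Fin m)))
    (hR : ∀ ν, R ν = {p | ∃ t : EuclideanSpace ℝ (Fin k),
      (p.1, t) ∈ H ν ∧ ∀ i, p.2 i = M i t}) :
    (∀ ν, G ⊆ convexHull ℝ (R ν)) ∧
      Tendsto (fun ν => Metric.hausdorffDist (convexHull ℝ (R ν)) (convexHull ℝ G))
        atTop (nhds 0) :=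
  relaxation_convergence_for_multilinear_compositions_general n k m D hDne f M hM G hG graphF
    hgraphF H hHbd hHsup hHconv R hR
end
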